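/- The number of pairs (I,s), where I is a linear set partition of {1,…,n} and s is a permutation of {1,…,n} fixing every block of I setwise (i.e. the cardinality of the boxed ramified monoid BR(S_n)), equals Σ_{(μ_1,…,μ_k) ∈ C_n} μ_1!·μ_2!⋯μ_k!, where the sum runs over all compositions of n into positive parts. -/

import Mathlib

open scoped Classical

/-- The underlying type of the ramified symmetric monoid `R(S_n) = P_n ⋊ S_n`:
pairs of a set partition of `{1,…,n}` (an equivalence relation on `Fin n`)
and a permutation of `{1,…,n}`. -/
abbrev RS (n : ℕ) : Type := Setoid (Fin n) × Equiv.Perm (Fin n)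

/-- The relabeling action `s · J` of a permutation on a set partition. -/
def permSetoid {n : ℕ} (s : Equiv.Perm (Fin n)) (J : Setoid (Fin n)) : Setoid (Fin n) :=
  Setoid.comap s.symm J

lemma permSetoid_rel {n : ℕ} (s : Equiv.Perm (Fin n)) (J : Setoid (Fin n)) (x y : Fin n) :
    permSetoid s J x y ↔ J (s.symm x) (s.symm y) := Iff.rfl

/-- Relabeling by `s` as an order isomorphism of the lattice of set partitions. -/
def permOrderIso {n : ℕ} (s : Equiv.Perm (Fin n)) : Setoid (Fin n) ≃o Setoid (Fin n) where
  toFun := permSetoid s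
  invFun := permSetoid s⁻¹
  left_inv J := Setoid.ext fun a b => by
    simp only [permSetoid_rel]; simp [Equiv.Perm.inv_def]
  right_inv J := Setoid.ext fun a b => by
    simp only [permSetoid_rel]; simp [Equiv.Perm.inv_def]
  map_rel_iff' := by
    intro J K
    constructor
    · intro h a b hab
      have := @h (s a) (s b)
      simp only [permSetoid_rel, Equiv.symm_apply_apply] at this
      exact this hab
    · intro h a b hab
      exact h hab

lemma permSetoid_sup {n : ℕ} (s : Equiv.Perm (Fin n)) (J K : Setoid (Fin n)) :
    permSetoid s (J ⊔ K) = permSetoid s J ⊔ permSetoid s K :=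
  (permOrderIso s).map_sup J K

lemma permSetoid_mul {n : ℕ} (s t : Equiv.Perm (Fin n)) (K : Setoid (Fin n)) :
    permSetoid (s * t) K = permSetoid s (permSetoid t K) :=
  Setoid.ext fun _ _ => Iff.rfl

lemma permSetoid_one {n : ℕ} (K : Setoid (Fin n)) : permSetoid 1 K = K :=
  Setoid.ext fun _ _ => Iff.rfl

lemma permSetoid_bot {n : ℕ} (s : Equiv.Perm (Fin n)) : permSetoid s (⊥ : Setoid (Fin n)) = ⊥ :=
  Setoid.ext fun a b => by
    constructor
    · intro h
      have : s.symm a = s.symm b := h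
      exact s.symm.injective this
    · rintro rfl; exact Setoid.refl' _ _

/-- The ramified symmetric monoid `R(S_n) = P_n ⋊ S_n`, with product
`(I,s)(J,t) = (I ⊔ s·J, st)` and identity `(⊥, id)`. -/
instance RS.monoid (n : ℕ) : Monoid (RS n) where
  mul a b := (a.1 ⊔ permSetoid a.2 b.1, a.2 * b.2)
  one := (⊥, 1)
  one_mul a := by
    show ((⊥ : Setoid (Fin n)) ⊔ permSetoid 1 a.1, 1 * a.2) = a
    rw [permSetoid_one, bot_sup_eq, one_mul]
  mul_one a := by
    show (a.1 ⊔ permSetoid a.2 ⊥, a.2 * 1) = a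
    rw [permSetoid_bot, sup_bot_eq, mul_one]
  mul_assoc a b c := by
    show ((a.1 ⊔ permSetoid a.2 b.1) ⊔ permSetoid (a.2 * b.2) c.1, a.2 * b.2 * c.2)
      = (a.1 ⊔ permSetoid a.2 (b.1 ⊔ permSetoid b.2 c.1), a.2 * (b.2 * c.2))
    rw [permSetoid_mul, permSetoid_sup, sup_assoc, mul_assoc]

lemma RS.mul_def {n : ℕ} (a b : RS n) :
    a * b = (a.1 ⊔ permSetoid a.2 b.1, a.2 * b.2) := rfl

lemma RS.one_def {n : ℕ} : (1 : RS n) = (⊥, 1) := rfl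

/-- A set partition of `{1,…,n}` is linear (convex) if all its blocks are intervals. -/
def IsLinear {n : ℕ} (R : Setoid (Fin n)) : Prop :=
  ∀ x y z : Fin n, x ≤ y → y ≤ z → R x z → R x y

/-- `s` fixes every block of `R` setwise. -/
def FixesBlocks {n : ℕ} (s : Equiv.Perm (Fin n)) (R : Setoid (Fin n)) : Prop :=
  ∀ x : Fin n, s '' {y | R x y} = {y | R x y}

/-- The carrier of the boxed ramified monoid `BR(S_n)`: pairs `(I,s)` with `I`
linear and `s` fixing every block of `I` setwise. -/
def BRset (n : ℕ) : Set (RS n) := {p | IsLinear p.1 ∧ FixesBlocks p.2 p.1}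

/-- The set partition of `{1,…,n}` whose unique non-singleton block is `{i,j}`. -/
def pairSetoid {n : ℕ} (i j : Fin n) : Setoid (Fin n) where
  r x y := x = y ∨ (x = i ∧ y = j) ∨ (x = j ∧ y = i)
  iseqv := by
    constructor
    · intro x; left; rfl
    · intro x y h; rcases h with rfl | ⟨rfl, rfl⟩ | ⟨rfl, rfl⟩ <;> tauto
    · intro x y z hxy hyz
      rcases hxy with h1 | ⟨h1, h2⟩ | ⟨h1, h2⟩ <;>
        rcases hyz with h3 | ⟨h3, h4⟩ | ⟨h3, h4⟩ <;> subst_vars <;> tauto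

/-- The generator `e_i = (ê_i, id)` of `BR(S_n)`, where `ê_i` is the linear partition
whose only non-singleton block is `{i, i+1}`. -/
def eElt {n : ℕ} (i : Fin (n - 1)) : RS n :=
  (pairSetoid ⟨i.1, by omega⟩ ⟨i.1 + 1, by omega⟩, 1)

/-- The generator `z_i = (ê_i, s_i)` of `BR(S_n)`, where `s_i` is the transposition
`(i, i+1)`. -/
def zElt {n : ℕ} (i : Fin (n - 1)) : RS n :=
  (pairSetoid ⟨i.1, by omega⟩ ⟨i.1 + 1, by omega⟩,
    Equiv.swap ⟨i.1, by omega⟩ ⟨i.1 + 1, by omega⟩)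

section Aux

variable {n : ℕ}

def kerI (μ : Composition n) : Setoid (Fin n) := Setoid.ker μ.index

lemma kerI_rel (μ : Composition n) (x y : Fin n) : kerI μ x y ↔ μ.index x = μ.index y :=
  Iff.rfl

lemma brIndexMono (μ : Composition n) : Monotone μ.index := by
  intro x y hxy
  by_contra h
  push_neg at h
  have h0 : (μ.index y : ℕ) < (μ.index x : ℕ) := h
  have h1 := μ.lt_sizeUpTo_index_succ y
  rw [Fin.val_succ] at h1
  have h2 : μ.sizeUpTo ((μ.index y : ℕ) + 1) ≤ μ.sizeUpTo (μ.index x) :=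
    μ.monotone_sizeUpTo h0
  have h3 := μ.sizeUpTo_index_le x
  have hxy' : (x : ℕ) ≤ y := hxy
  omega

lemma brIndexSurj (μ : Composition n) : Function.Surjective μ.index := fun i =>
  ⟨μ.embedding i ⟨0, μ.one_le_blocksFun i⟩, μ.index_embedding i _⟩

lemma kerI_linear (μ : Composition n) : IsLinear (kerI μ) := by
  intro x y z hxy hyz hxz
  have h1 : μ.index x ≤ μ.index y := brIndexMono μ hxy
  have h2 : μ.index y ≤ μ.index z := brIndexMono μ hyz
  have hxz' : μ.index x = μ.index z := hxz
  exact le_antisymm h1 (hxz' ▸ h2)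

def fiberEquiv (μ : Composition n) (i : Fin μ.length) :
    {a : Fin n // μ.index a = i} ≃ Fin (μ.blocksFun i) where
  toFun a := Fin.cast (congrArg μ.blocksFun a.2) (μ.invEmbedding a.1)
  invFun k := ⟨μ.embedding i k, μ.index_embedding i k⟩
  left_inv a := by
    apply Subtype.ext
    apply Fin.ext
    simp only [Composition.coe_embedding, Fin.coe_cast, Composition.coe_invEmbedding]
    have h := μ.sizeUpTo_index_le a.1
    rw [a.2] at h ⊢
    omega
  right_inv k := by
    apply Fin.ext
    simp only [Fin.coe_cast]
    exact μ.invEmbedding_comp i k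

lemma card_fiber (μ : Composition n) (i : Fin μ.length) :
    Fintype.card {a : Fin n // μ.index a = i} = μ.blocksFun i := by
  rw [Fintype.card_congr (fiberEquiv μ i), Fintype.card_fin]

lemma fixes_kerI_iff (μ : Composition n) (s : Equiv.Perm (Fin n)) :
    FixesBlocks s (kerI μ) ↔ μ.index ∘ s = μ.index := by
  constructor
  · intro h
    funext a
    have ha : s a ∈ s '' {y | kerI μ a y} := ⟨a, rfl, rfl⟩
    rw [h a] at ha
    exact (ha : μ.index a = μ.index (s a)).symm
  · intro h x
    have h' : ∀ a, μ.index (s a) = μ.index a := fun a => congrFun h a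
    ext y
    simp only [Set.mem_image, Set.mem_setOf_eq]
    constructor
    · rintro ⟨z, hz, rfl⟩
      show μ.index x = μ.index (s z)
      rw [h' z]; exact hz
    · intro hy
      refine ⟨s.symm y, ?_, s.apply_symm_apply y⟩
      show μ.index x = μ.index (s.symm y)
      have := h' (s.symm y)
      rw [s.apply_symm_apply] at this
      rw [← this]; exact hy

end Aux

section Inj

variable {n : ℕ}

lemma mono_surj_zero {k : ℕ} {f : Fin n → Fin k} (hf : Monotone f)
    (h0 : 0 < n) : (f ⟨0, h0⟩ : ℕ) = 0 ∨ ¬ Function.Surjective f := by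
  by_cases hfs : Function.Surjective f
  · left
    have hk : 0 < k := lt_of_le_of_lt (Nat.zero_le _) (f ⟨0, h0⟩).2
    obtain ⟨y, hy⟩ := hfs ⟨0, hk⟩
    have h1 : f ⟨0, h0⟩ ≤ f y := hf (by simp [Fin.le_def])
    rw [hy] at h1
    have h2 := Fin.le_def.mp h1
    simp at h2
    omega
  · right; exact hfs

lemma mono_surj_zero' {k : ℕ} {f : Fin n → Fin k} (hf : Monotone f)
    (hfs : Function.Surjective f) (h0 : 0 < n) : (f ⟨0, h0⟩ : ℕ) = 0 :=
  (mono_surj_zero hf h0).resolve_right (not_not.mpr hfs)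

lemma mono_surj_step {k : ℕ} {f : Fin n → Fin k} (hf : Monotone f)
    (hfs : Function.Surjective f) {m : ℕ} (hm : m + 1 < n)
    (hne : f ⟨m + 1, hm⟩ ≠ f ⟨m, by omega⟩) :
    (f ⟨m + 1, hm⟩ : ℕ) = (f ⟨m, by omega⟩ : ℕ) + 1 := by
  have hle : f ⟨m, by omega⟩ ≤ f ⟨m + 1, hm⟩ := hf (by simp [Fin.le_def])
  have hlt : (f ⟨m, by omega⟩ : ℕ) < (f ⟨m + 1, hm⟩ : ℕ) := by
    rcases lt_or_eq_of_le (Fin.le_def.mp hle) with h | h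
    · exact h
    · exact absurd (Fin.ext h.symm) hne
  by_contra hcon
  have h2 : (f ⟨m, by omega⟩ : ℕ) + 1 < (f ⟨m + 1, hm⟩ : ℕ) := by omega
  obtain ⟨y, hy⟩ := hfs ⟨(f ⟨m, by omega⟩ : ℕ) + 1, lt_trans h2 (f ⟨m + 1, hm⟩).2⟩
  rcases le_or_gt (y : ℕ) m with h | h
  · have h3 : f y ≤ f ⟨m, by omega⟩ := hf (Fin.le_def.mpr h)
    rw [hy] at h3
    have := Fin.le_def.mp h3
    simp at this
  · have h3 : f ⟨m + 1, hm⟩ ≤ f y := hf (Fin.le_def.mpr h)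
    rw [hy] at h3
    have := Fin.le_def.mp h3
    simp at this
    omega

lemma mono_surj_vals {k l : ℕ} {f : Fin n → Fin k} {g : Fin n → Fin l}
    (hf : Monotone f) (hg : Monotone g) (hfs : Function.Surjective f)
    (hgs : Function.Surjective g) (hker : ∀ x y, f x = f y ↔ g x = g y) :
    ∀ (m : ℕ) (hm : m < n), (f ⟨m, hm⟩ : ℕ) = (g ⟨m, hm⟩ : ℕ) := by
  intro m
  induction m with
  | zero =>
    intro hm
    rw [mono_surj_zero' hf hfs hm, mono_surj_zero' hg hgs hm]
  | succ m ih =>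
    intro hm
    have hm' : m < n := by omega
    by_cases hfe : f ⟨m + 1, hm⟩ = f ⟨m, hm'⟩
    · have hge : g ⟨m + 1, hm⟩ = g ⟨m, hm'⟩ := (hker _ _).mp hfe
      rw [hfe, hge]; exact ih hm'
    · have hgne : g ⟨m + 1, hm⟩ ≠ g ⟨m, hm'⟩ := fun h => hfe ((hker _ _).mpr h)
      rw [mono_surj_step hf hfs hm hfe, mono_surj_step hg hgs hm hgne, ih hm']

lemma mono_surj_len {k l : ℕ} {f : Fin n → Fin k} {g : Fin n → Fin l}
    (hf : Monotone f) (hg : Monotone g) (hfs : Function.Surjective f)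
    (hgs : Function.Surjective g) (hker : ∀ x y, f x = f y ↔ g x = g y) :
    k = l := by
  rcases Nat.eq_zero_or_pos n with rfl | hn
  · have hk : k = 0 := by
      by_contra h
      obtain ⟨y, -⟩ := hfs ⟨0, Nat.pos_of_ne_zero h⟩
      exact y.elim0
    have hl : l = 0 := by
      by_contra h
      obtain ⟨y, -⟩ := hgs ⟨0, Nat.pos_of_ne_zero h⟩
      exact y.elim0
    rw [hk, hl]
  · have hlast : ∀ {k' : ℕ} (f' : Fin n → Fin k'), Monotone f' → Function.Surjective f' →
        (f' ⟨n - 1, by omega⟩ : ℕ) = k' - 1 ∧ 0 < k' := by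
      intro k' f' hf' hfs'
      have hk : 0 < k' := lt_of_le_of_lt (Nat.zero_le _) (f' ⟨n - 1, by omega⟩).2
      obtain ⟨y, hy⟩ := hfs' ⟨k' - 1, by omega⟩
      have h1 : f' y ≤ f' ⟨n - 1, by omega⟩ := hf' (Fin.le_def.mpr (by have := y.2; simp; omega))
      rw [hy] at h1
      have h2 := Fin.le_def.mp h1
      have h3 := (f' ⟨n - 1, by omega⟩).2
      simp at h2
      exact ⟨by omega, hk⟩
    obtain ⟨hfl, hk⟩ := hlast f hf hfs
    obtain ⟨hgl, hl⟩ := hlast g hg hgs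
    have := mono_surj_vals hf hg hfs hgs hker (n - 1) (by omega)
    omega

lemma kerI_injective : Function.Injective (kerI (n := n)) := by
  intro μ ν h
  have hker : ∀ x y : Fin n, μ.index x = μ.index y ↔ ν.index x = ν.index y := by
    intro x y
    constructor
    · intro hh
      have h2 : kerI μ x y := hh
      rw [h] at h2
      exact h2
    · intro hh
      have h2 : kerI ν x y := hh
      rw [← h] at h2
      exact h2
  have hlen : μ.length = ν.length :=
    mono_surj_len (brIndexMono μ) (brIndexMono ν) (brIndexSurj μ) (brIndexSurj ν) hker
  have hvals := mono_surj_vals (brIndexMono μ) (brIndexMono ν) (brIndexSurj μ) (brIndexSurj ν) hker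
  have hb : ∀ i : Fin μ.length, μ.blocksFun i = ν.blocksFun (Fin.cast hlen i) := by
    intro i
    rw [← card_fiber, ← card_fiber]
    apply Fintype.card_congr
    apply Equiv.subtypeEquivRight
    intro x
    rw [Fin.ext_iff, Fin.ext_iff, Fin.coe_cast, hvals x.1 x.2]
  apply Composition.ext
  rw [← μ.ofFn_blocksFun, ← ν.ofFn_blocksFun]
  apply List.ext_getElem
  · simp [hlen]
  · intro i h1 h2
    simp only [List.getElem_ofFn]
    have := hb ⟨i, by simpa using h1⟩
    simpa using this

end Inj

section Surj

variable {n : ℕ}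

lemma index_eq_of_mem (μ : Composition n) {y : Fin n} {i : Fin μ.length}
    (h1 : μ.sizeUpTo i ≤ (y : ℕ)) (h2 : (y : ℕ) < μ.sizeUpTo ((i : ℕ) + 1)) :
    μ.index y = i :=
  (μ.mem_range_embedding_iff'.mp
    (μ.mem_range_embedding_iff.mpr ⟨h1, h2⟩)).symm

lemma boundary_coe (μ : Composition n) (i : Fin (μ.length + 1)) :
    ((μ.boundary i : Fin (n + 1)) : ℕ) = μ.sizeUpTo i := rfl

lemma index_eq_iff_boundaries (μ : Composition n) {x y : Fin n} (hxy : x ≤ y) :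
    μ.index x = μ.index y ↔
      ∀ b ∈ μ.boundaries, ¬((x : ℕ) < (b : ℕ) ∧ (b : ℕ) ≤ (y : ℕ)) := by
  constructor
  · rintro h b hb ⟨hb1, hb2⟩
    obtain ⟨i, -, rfl⟩ := Finset.mem_map.mp hb
    have hb1' : (x : ℕ) < μ.sizeUpTo i := hb1
    have hb2' : μ.sizeUpTo i ≤ (y : ℕ) := hb2
    clear hb1 hb2
    have hx1 := μ.sizeUpTo_index_le x
    have hx2 := μ.lt_sizeUpTo_index_succ y
    rw [Fin.val_succ] at hx2
    rw [h] at hx1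
    rcases le_or_gt (i : ℕ) ((μ.index y : ℕ)) with hc | hc
    · have := μ.monotone_sizeUpTo hc
      omega
    · have := μ.monotone_sizeUpTo (show (μ.index y : ℕ) + 1 ≤ (i : ℕ) from hc)
      omega
  · intro h
    have h1 := μ.lt_sizeUpTo_index_succ x
    rw [Fin.val_succ] at h1
    have h2 := μ.sizeUpTo_index_le x
    have hib : ((μ.index x : ℕ) + 1) < μ.length + 1 := by
      have := (μ.index x).2; omega
    have hmem : μ.boundary ⟨(μ.index x : ℕ) + 1, hib⟩ ∈ μ.boundaries := by
      apply Finset.mem_map_of_mem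
      exact Finset.mem_univ _
    have h3 : ¬((x : ℕ) < μ.sizeUpTo ((μ.index x : ℕ) + 1) ∧
        μ.sizeUpTo ((μ.index x : ℕ) + 1) ≤ (y : ℕ)) := h _ hmem
    have h4 : (y : ℕ) < μ.sizeUpTo ((μ.index x : ℕ) + 1) := by
      by_contra hc
      exact h3 ⟨by omega, by omega⟩
    have h5 : μ.sizeUpTo (μ.index x) ≤ (y : ℕ) := le_trans h2 hxy
    exact (index_eq_of_mem μ h5 h4).symm

lemma chain_of_consec {I : Setoid (Fin n)} :
    ∀ (d : ℕ) (x y : Fin n), (y : ℕ) = (x : ℕ) + d →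
      (∀ (j : ℕ) (h2 : j < (y : ℕ)), (x : ℕ) ≤ j →
        I ⟨j, lt_trans h2 y.isLt⟩ ⟨j + 1, lt_of_le_of_lt h2 y.isLt⟩) →
      I x y := by
  intro d
  induction d with
  | zero =>
    intro x y h _
    have hxy : x = y := Fin.ext (by omega)
    rw [hxy]
  | succ d ih =>
    intro x y h hcons
    have hxd : (x : ℕ) + d < n := by have := y.isLt; omega
    have h1 : I x ⟨(x : ℕ) + d, hxd⟩ := by
      apply ih x ⟨(x : ℕ) + d, hxd⟩ rfl
      intro j h2 hj
      have h2' : j < (x : ℕ) + d := h2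
      exact hcons j (show j < (y : ℕ) by omega) hj
    have h2 : I (⟨(x : ℕ) + d, hxd⟩ : Fin n) y := by
      have hc := hcons ((x : ℕ) + d) (by omega) (by omega)
      have hy : y = ⟨(x : ℕ) + d + 1, h ▸ y.isLt⟩ := Fin.ext (show (y : ℕ) = (x : ℕ) + d + 1 by omega)
      rw [hy]
      exact hc
    exact Setoid.trans' I h1 h2

lemma consec_of_linear {I : Setoid (Fin n)} (hI : IsLinear I) {x y : Fin n} (hxy : x ≤ y)
    (h : I x y) (j : ℕ) (h2 : j < (y : ℕ)) (h1 : (x : ℕ) ≤ j) :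
    I ⟨j, lt_trans h2 y.isLt⟩ ⟨j + 1, lt_of_le_of_lt h2 y.isLt⟩ := by
  have ha : I x ⟨j, lt_trans h2 y.isLt⟩ :=
    hI x _ y (Fin.le_def.mpr h1) (Fin.le_def.mpr (le_of_lt h2)) h
  have hb : I x ⟨j + 1, lt_of_le_of_lt h2 y.isLt⟩ :=
    hI x _ y (Fin.le_def.mpr (show (x : ℕ) ≤ j + 1 by omega))
      (Fin.le_def.mpr (show j + 1 ≤ (y : ℕ) from h2)) h
  exact Setoid.trans' I (Setoid.symm' I ha) hb

/-- The `CompositionAsSet` associated to a setoid: boundaries are `0`, `n`, and the points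
where consecutive elements are unrelated. -/
noncomputable def linSet (I : Setoid (Fin n)) : CompositionAsSet n where
  boundaries := Finset.univ.filter (fun b : Fin (n + 1) =>
    b.1 = 0 ∨ b.1 = n ∨ ∃ h : 0 < b.1 ∧ b.1 < n, ¬ I ⟨b.1 - 1, by omega⟩ ⟨b.1, h.2⟩)
  zero_mem := by simp
  getLast_mem := by simp

lemma exists_kerI {I : Setoid (Fin n)} (hI : IsLinear I) : ∃ μ : Composition n, kerI μ = I := by
  refine ⟨(linSet I).toComposition, ?_⟩
  set μ := (linSet I).toComposition with hμ
  have hbd : μ.boundaries = (linSet I).boundaries := CompositionAsSet.toComposition_boundaries _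
  suffices key : ∀ x y : Fin n, x ≤ y → (kerI μ x y ↔ I x y) by
    refine Setoid.ext fun x y => ?_
    rcases le_total x y with hle | hle
    · exact key x y hle
    · constructor
      · intro hxy; exact Setoid.symm' I ((key y x hle).mp (Setoid.symm' _ hxy))
      · intro hxy; exact Setoid.symm' _ ((key y x hle).mpr (Setoid.symm' I hxy))
  intro x y hxy
  rw [kerI_rel, index_eq_iff_boundaries μ hxy]
  constructor
  · intro h
    apply chain_of_consec ((y : ℕ) - (x : ℕ)) x y (by have := Fin.le_def.mp hxy; omega)
    intro j h2 h1
    by_contra hc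
    have h2' : j < (y : ℕ) := h2
    refine h ⟨j + 1, by have := y.isLt; omega⟩ ?_
      (show (x : ℕ) < j + 1 ∧ j + 1 ≤ (y : ℕ) from ⟨by omega, by omega⟩)
    rw [hbd]
    refine Finset.mem_filter.mpr ⟨Finset.mem_univ _, Or.inr (Or.inr
      ⟨show 0 < j + 1 ∧ j + 1 < n from ⟨by omega, by have := y.isLt; omega⟩, ?_⟩)⟩
    exact hc
  · rintro h b hb ⟨hb1, hb2⟩
    rw [hbd] at hb
    obtain ⟨-, hb'⟩ := Finset.mem_filter.mp hb
    obtain ⟨bv, hbvlt⟩ := b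
    simp only at hb' hb1 hb2
    rcases hb' with h0 | hn | ⟨⟨hpos, hlt⟩, hni⟩
    · omega
    · have := y.isLt; omega
    · obtain ⟨c, rfl⟩ : ∃ c, bv = c + 1 := ⟨bv - 1, by omega⟩
      have hc := consec_of_linear hI hxy h c (by omega) (by omega)
      exact hni hc

end Surj

section Final

variable {n : ℕ}

noncomputable def brPhi :
    (Σ μ : Composition n, {s : Equiv.Perm (Fin n) // FixesBlocks s (kerI μ)}) →
      {p : Setoid (Fin n) × Equiv.Perm (Fin n) // IsLinear p.1 ∧ FixesBlocks p.2 p.1} :=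
  fun x => ⟨(kerI x.1, x.2.1), kerI_linear x.1, x.2.2⟩

lemma brPhi_bij : Function.Bijective (brPhi (n := n)) := by
  constructor
  · rintro ⟨μ, s, hs⟩ ⟨ν, t, ht⟩ h
    simp only [brPhi, Subtype.mk_eq_mk, Prod.mk.injEq] at h
    obtain ⟨h1, h2⟩ := h
    obtain rfl : μ = ν := kerI_injective h1
    subst h2
    rfl
  · rintro ⟨⟨I, s⟩, hlin, hfix⟩
    obtain ⟨μ, rfl⟩ := exists_kerI hlin
    exact ⟨⟨μ, s, hfix⟩, rfl⟩

lemma card_fix (μ : Composition n) :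
    Nat.card {s : Equiv.Perm (Fin n) // FixesBlocks s (kerI μ)}
      = (μ.blocks.map Nat.factorial).prod := by
  rw [Nat.card_congr (Equiv.subtypeEquivRight fun s => fixes_kerI_iff μ s)]
  rw [Nat.card_eq_fintype_card, DomMulAct.stabilizer_card μ.index]
  rw [← μ.ofFn_blocksFun, List.map_ofFn, List.prod_ofFn]
  refine Finset.prod_congr rfl fun i _ => ?_
  rw [card_fiber]
  rfl

theorem card_BRset' (n : ℕ) :
    Nat.card {p : Setoid (Fin n) × Equiv.Perm (Fin n) // IsLinear p.1 ∧ FixesBlocks p.2 p.1}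
      = ∑ μ : Composition n, (μ.blocks.map Nat.factorial).prod := by
  rw [Nat.card_congr (Equiv.ofBijective _ brPhi_bij).symm]
  rw [Nat.card_eq_fintype_card, Fintype.card_sigma]
  refine Finset.sum_congr rfl fun μ _ => ?_
  rw [← card_fix μ, Nat.card_eq_fintype_card]

end Final

/-- the number of pairs `(I,s)` with `I` a linear set partition of
`{1,…,n}` and `s` a permutation fixing every block of `I` setwise (the cardinality
of the boxed ramified monoid `BR(S_n)`) equals
`Σ_{(μ_1,…,μ_k) ∈ C_n} μ_1!⋯μ_k!`, summed over all compositions of `n`. -/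
theorem card_BRset (n : ℕ) :
    Nat.card {p : Setoid (Fin n) × Equiv.Perm (Fin n) // IsLinear p.1 ∧ FixesBlocks p.2 p.1}
      = ∑ μ : Composition n, (μ.blocks.map Nat.factorial).prod := by
  exact card_BRset' n
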